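/- arXiv:2304.02590 — 3 statements merged into one kernel-verified Lean document; each statement's English description precedes it below -/
import Mathlib

section
/- Let A and B be stable matching instances on the same n workers and n firms such that every worker has the same preference order in A as in B. If the set M_A ∩ M_B of matchings stable under both A and B is nonempty, then it contains a firm-optimal matching M⊥: a matching M⊥ ∈ M_A ∩ M_B such that for every M ∈ M_A ∩ M_B and every firm f, f weakly prefers M⊥⁻¹(f) to M⁻¹(f) under its preference order in A and also under its preference order in B. -/
/-- A stable matching instance on `n` workers and `n` firms: each worker `w` has a strict
total preference order over firms encoded by an injective rank function `wRank w`
(lower rank = more preferred), and each firm `f` has one over workers (`fRank f`). -/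
structure SMInstance (n : ℕ) where
  wRank : Fin n → Fin n → Fin n
  fRank : Fin n → Fin n → Fin n
  wRank_inj : ∀ w, Function.Injective (wRank w)
  fRank_inj : ∀ f, Function.Injective (fRank f)

/-- `(w, f)` is a blocking pair of the matching `M` under instance `I`:
`M w ≠ f`, `w` strictly prefers `f` to `M w`, and `f` strictly prefers `w`
to its `M`-partner (the worker `w'` with `M w' = f`). -/
def Blocking {n : ℕ} (I : SMInstance n) (M : Fin n → Fin n) (w f : Fin n) : Prop :=
  M w ≠ f ∧ I.wRank w f < I.wRank w (M w) ∧
    ∃ w', M w' = f ∧ I.fRank f w < I.fRank f w'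

/-- A matching (bijection) is stable under `I` if it has no blocking pair. -/
def IsStable {n : ℕ} (I : SMInstance n) (M : Fin n → Fin n) : Prop :=
  Function.Bijective M ∧ ∀ w f, ¬ Blocking I M w f

/-- The join `M₁ ∨_I M₂`: each worker gets its less preferred partner. -/
def joinMap {n : ℕ} (I : SMInstance n) (M₁ M₂ : Fin n → Fin n) : Fin n → Fin n :=
  fun w => if I.wRank w (M₁ w) < I.wRank w (M₂ w) then M₂ w else M₁ w

/-- The meet `M₁ ∧_I M₂`: each worker gets its more preferred partner. -/
def meetMap {n : ℕ} (I : SMInstance n) (M₁ M₂ : Fin n → Fin n) : Fin n → Fin n :=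
  fun w => if I.wRank w (M₁ w) < I.wRank w (M₂ w) then M₁ w else M₂ w

/-!
The join `M₁ ∨ M₂` of two matchings stable under an instance is again stable under it, and it
is computed from worker preferences alone, which `A` and `B` share; so the doubly stable
matchings are closed under joins. A finite nonempty family closed under joins has a
worker-pessimal member `M⊥`. By opposition of interests, a firm weakly prefers its
`M⊥`-partner to any worker who weakly prefers that firm to their own `M⊥`-partner, and this
holds under `A` and under `B` alike.
-/

variable {n : ℕ} {I : SMInstance n} {M M₁ M₂ : Fin n → Fin n} {w w' a b f : Fin n}

lemma joinMap_eq_or (I : SMInstance n) (M₁ M₂ : Fin n → Fin n) (w : Fin n) :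
    joinMap I M₁ M₂ w = M₁ w ∨ joinMap I M₁ M₂ w = M₂ w := by
  unfold joinMap; split_ifs <;> simp

lemma meetMap_eq_or (I : SMInstance n) (M₁ M₂ : Fin n → Fin n) (w : Fin n) :
    meetMap I M₁ M₂ w = M₁ w ∨ meetMap I M₁ M₂ w = M₂ w := by
  unfold meetMap; split_ifs <;> simp

lemma le_joinMap_left (I : SMInstance n) (M₁ M₂ : Fin n → Fin n) (w : Fin n) :
    I.wRank w (M₁ w) ≤ I.wRank w (joinMap I M₁ M₂ w) := by
  unfold joinMap; split_ifs with h
  · exact h.le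
  · exact le_rfl

lemma le_joinMap_right (I : SMInstance n) (M₁ M₂ : Fin n → Fin n) (w : Fin n) :
    I.wRank w (M₂ w) ≤ I.wRank w (joinMap I M₁ M₂ w) := by
  unfold joinMap; split_ifs with h
  · exact le_rfl
  · exact not_lt.1 h

lemma meetMap_le_left (I : SMInstance n) (M₁ M₂ : Fin n → Fin n) (w : Fin n) :
    I.wRank w (meetMap I M₁ M₂ w) ≤ I.wRank w (M₁ w) := by
  unfold meetMap; split_ifs with h
  · exact le_rfl
  · exact not_lt.1 h

lemma meetMap_le_right (I : SMInstance n) (M₁ M₂ : Fin n → Fin n) (w : Fin n) :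
    I.wRank w (meetMap I M₁ M₂ w) ≤ I.wRank w (M₂ w) := by
  unfold meetMap; split_ifs with h
  · exact h.le
  · exact le_rfl

lemma eq_of_meetMap_eq_joinMap (h : meetMap I M₁ M₂ w = joinMap I M₁ M₂ w) : M₁ w = M₂ w := by
  unfold meetMap joinMap at h; split_ifs at h
  · exact h
  · exact h.symm

lemma joinMap_comm (I : SMInstance n) (M₁ M₂ : Fin n → Fin n) :
    joinMap I M₁ M₂ = joinMap I M₂ M₁ := by
  funext w
  unfold joinMap; split_ifs with h₁₂ h₂₁ h₂₁
  · exact absurd (h₁₂.trans h₂₁) (lt_irrefl _)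
  · rfl
  · rfl
  · exact I.wRank_inj w (le_antisymm (not_lt.1 h₂₁) (not_lt.1 h₁₂))

lemma joinMap_congr {A B : SMInstance n} (hW : A.wRank = B.wRank) :
    joinMap A = joinMap B := by
  funext M₁ M₂ w
  simp only [joinMap, hW]

/-- Opposition of interests. -/
lemma IsStable.fRank_le_of_wRank_le (hM : IsStable I M) (hw : M w = f)
    (hw' : I.wRank w' f ≤ I.wRank w' (M w')) : I.fRank f w ≤ I.fRank f w' := by
  by_cases hfw' : M w' = f
  · rw [hM.1.1 (hw.trans hfw'.symm)]
  · have hlt : I.wRank w' f < I.wRank w' (M w') :=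
      hw'.lt_of_ne fun h => hfw' (I.wRank_inj w' h).symm
    by_contra hf
    exact hM.2 w' f ⟨hfw', hlt, w, hw, not_le.1 hf⟩

lemma eq_of_crossed (h₁ : IsStable I M₁) (h₂ : IsStable I M₂) (ha : M₂ a = f) (hb : M₁ b = f)
    (pa : I.wRank a f ≤ I.wRank a (M₁ a)) (pb : I.wRank b f ≤ I.wRank b (M₂ b)) : a = b :=
  I.fRank_inj f (le_antisymm (h₂.fRank_le_of_wRank_le ha pb) (h₁.fRank_le_of_wRank_le hb pa))

lemma meetMap_injective (h₁ : IsStable I M₁) (h₂ : IsStable I M₂) :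
    Function.Injective (meetMap I M₁ M₂) := by
  intro a b hab
  have pa₁ := meetMap_le_left I M₁ M₂ a
  have pa₂ := meetMap_le_right I M₁ M₂ a
  have pb₁ := meetMap_le_left I M₁ M₂ b
  have pb₂ := meetMap_le_right I M₁ M₂ b
  rw [← hab] at pb₁ pb₂
  rcases meetMap_eq_or I M₁ M₂ a with ha | ha <;> rcases meetMap_eq_or I M₁ M₂ b with hb | hb
  · exact h₁.1.1 (ha.symm.trans (hab.trans hb))
  · exact (eq_of_crossed h₁ h₂ (hb.symm.trans hab.symm) ha.symm pb₁ pa₂).symm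
  · exact eq_of_crossed h₁ h₂ ha.symm (hb.symm.trans hab.symm) pa₁ pb₂
  · exact h₂.1.1 (ha.symm.trans (hab.trans hb))

lemma meetMap_surjective (h₁ : IsStable I M₁) (h₂ : IsStable I M₂) :
    Function.Surjective (meetMap I M₁ M₂) :=
  (Finite.injective_iff_bijective.1 (meetMap_injective h₁ h₂)).2

/-- If `a` keeps its `M₁`-partner and `b` its `M₂`-partner in the join, they get different firms:
the meet also covers that firm `f`, but only through `a` or `b`, which would then have
the same partner in `M₁` and `M₂`. -/
lemma eq_of_joinMap_eq_left_of_joinMap_eq_right (h₁ : IsStable I M₁) (h₂ : IsStable I M₂)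
    (ha : joinMap I M₁ M₂ a = M₁ a) (hb : joinMap I M₁ M₂ b = M₂ b)
    (hab : joinMap I M₁ M₂ a = joinMap I M₁ M₂ b) : a = b := by
  obtain ⟨c, hc⟩ := meetMap_surjective h₁ h₂ (joinMap I M₁ M₂ a)
  rcases meetMap_eq_or I M₁ M₂ c with hc' | hc'
  · obtain rfl : c = a := h₁.1.1 (hc'.symm.trans (hc.trans ha))
    exact h₂.1.1 ((eq_of_meetMap_eq_joinMap hc).symm.trans (ha.symm.trans (hab.trans hb)))
  · obtain rfl : c = b := h₂.1.1 (hc'.symm.trans (hc.trans (hab.trans hb)))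
    exact h₁.1.1 ((ha.symm.trans (hab.trans hb)).trans (eq_of_meetMap_eq_joinMap (hc.trans hab)).symm)

lemma joinMap_injective (h₁ : IsStable I M₁) (h₂ : IsStable I M₂) :
    Function.Injective (joinMap I M₁ M₂) := by
  intro a b hab
  rcases joinMap_eq_or I M₁ M₂ a with ha | ha <;> rcases joinMap_eq_or I M₁ M₂ b with hb | hb
  · exact h₁.1.1 (ha.symm.trans (hab.trans hb))
  · exact eq_of_joinMap_eq_left_of_joinMap_eq_right h₁ h₂ ha hb hab
  · exact (eq_of_joinMap_eq_left_of_joinMap_eq_right h₁ h₂ hb ha hab.symm).symm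
  · exact h₂.1.1 (ha.symm.trans (hab.trans hb))

lemma fRank_joinMap_le_left (h₁ : IsStable I M₁) (h₂ : IsStable I M₂)
    (hw' : joinMap I M₁ M₂ w' = f) (hw : M₁ w = f) : I.fRank f w' ≤ I.fRank f w := by
  by_cases hww' : w = w'
  · rw [hww']
  have hM₂w : joinMap I M₁ M₂ w = M₂ w :=
    (joinMap_eq_or I M₁ M₂ w).resolve_left fun h =>
      hww' (joinMap_injective h₁ h₂ ((h.trans hw).trans hw'.symm))
  have hM₂w' : M₂ w' = f :=
    ((joinMap_eq_or I M₁ M₂ w').resolve_left fun h =>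
      hww' (h₁.1.1 (hw.trans (hw'.symm.trans h)))).symm.trans hw'
  refine h₂.fRank_le_of_wRank_le hM₂w' ?_
  rw [← hw, ← hM₂w]
  exact le_joinMap_left I M₁ M₂ w

lemma Blocking.of_joinMap_eq_left (h₁ : IsStable I M₁) (h₂ : IsStable I M₂)
    (hw : joinMap I M₁ M₂ w = M₁ w) (hb : Blocking I (joinMap I M₁ M₂) w f) :
    Blocking I M₁ w f := by
  obtain ⟨-, hlt, w', hw', hf⟩ := hb
  rw [hw] at hlt
  obtain ⟨w₁, hw₁⟩ := h₁.1.2 f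
  exact ⟨fun h => (h ▸ hlt).false, hlt, w₁, hw₁,
    hf.trans_le (fRank_joinMap_le_left h₁ h₂ hw' hw₁)⟩

lemma IsStable.joinMap (h₁ : IsStable I M₁) (h₂ : IsStable I M₂) :
    IsStable I (joinMap I M₁ M₂) := by
  refine ⟨Finite.injective_iff_bijective.1 (joinMap_injective h₁ h₂), fun w f hb => ?_⟩
  rcases joinMap_eq_or I M₁ M₂ w with hw | hw
  · exact h₁.2 w f (hb.of_joinMap_eq_left h₁ h₂ hw)
  · rw [joinMap_comm] at hw hb
    exact h₂.2 w f (hb.of_joinMap_eq_left h₂ h₁ hw)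

/-- The member maximising the total worker rank is worker-pessimal, since joining any other
member with it raises no worker's rank. -/
lemma exists_worker_pessimal {P : (Fin n → Fin n) → Prop} (hne : ∃ M, P M)
    (hjoin : ∀ M₁ M₂, P M₁ → P M₂ → P (joinMap I M₁ M₂)) :
    ∃ Mb, P Mb ∧ ∀ M, P M → ∀ w, I.wRank w (M w) ≤ I.wRank w (Mb w) := by
  classical
  obtain ⟨M₀, hM₀⟩ := hne
  obtain ⟨Mb, hMb, hmax⟩ := (Finset.univ.filter P).exists_max_image
    (fun M => ∑ w, (I.wRank w (M w) : ℕ)) ⟨M₀, by simpa using hM₀⟩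
  rw [Finset.mem_filter] at hMb
  refine ⟨Mb, hMb.2, fun M hM w => ?_⟩
  have hle : ∀ v ∈ Finset.univ,
      (I.wRank v (Mb v) : ℕ) ≤ I.wRank v (joinMap I M Mb v) :=
    fun v _ => le_joinMap_right I M Mb v
  have hsum := (Finset.sum_eq_sum_iff_of_le hle).1 <| le_antisymm (Finset.sum_le_sum hle)
    (hmax _ (Finset.mem_filter.2 ⟨Finset.mem_univ _, hjoin M Mb hM hMb.2⟩))
  calc I.wRank w (M w) ≤ I.wRank w (joinMap I M Mb w) := le_joinMap_left I M Mb w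
    _ = I.wRank w (Mb w) := Fin.ext (hsum w (Finset.mem_univ w)).symm

theorem stmt3_general {n : ℕ} (A B : SMInstance n)
    (hW : A.wRank = B.wRank)
    (hne : ∃ M, IsStable A M ∧ IsStable B M) :
    ∃ Mbot, (IsStable A Mbot ∧ IsStable B Mbot) ∧
      ∀ M, (IsStable A M ∧ IsStable B M) →
        ∀ f w w', Mbot w = f → M w' = f →
          A.fRank f w ≤ A.fRank f w' ∧ B.fRank f w ≤ B.fRank f w' := by
  obtain ⟨Mb, hMb, hpess⟩ := exists_worker_pessimal (I := A) hne fun M₁ M₂ h₁ h₂ =>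
    ⟨h₁.1.joinMap h₂.1, joinMap_congr hW ▸ h₁.2.joinMap h₂.2⟩
  refine ⟨Mb, hMb, fun M hM f w w' hw hw' => ?_⟩
  have hA : A.wRank w' f ≤ A.wRank w' (Mb w') := hw' ▸ hpess M hM w'
  exact ⟨hMb.1.fRank_le_of_wRank_le hw hA, hMb.2.fRank_le_of_wRank_le hw (hW ▸ hA)⟩

/-- if A and B have identical worker preferences and some matching is
stable under both, then there is a firm-optimal matching stable under both:
every firm weakly prefers its partner there to its partner in any other matching
stable under both, under its preference orders in both A and B. -/
theorem stmt3 {n : ℕ} (hn : 1 ≤ n) (A B : SMInstance n)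
    (hW : A.wRank = B.wRank)
    (hne : ∃ M, IsStable A M ∧ IsStable B M) :
    ∃ Mbot, (IsStable A Mbot ∧ IsStable B Mbot) ∧
      ∀ M, (IsStable A M ∧ IsStable B M) →
        ∀ f w w', Mbot w = f → M w' = f →
          A.fRank f w ≤ A.fRank f w' ∧ B.fRank f w ≤ B.fRank f w' :=
  stmt3_general A B hW hne
end

section
/- Let A₁, A₂, …, A_k (k ≥ 2) be stable matching instances on the same n workers and n firms such that all workers except possibly one worker w₁ have identical preference orders in all of the instances. Then the set L' = M_{A_1} ∩ M_{A_2} ∩ … ∩ M_{A_k} is closed under the join and meet operations of each lattice L_{A_i}, and these join and meet operations coincide on L' across all the instances; in particular, L' is a sublattice of each L_{A_i}. -/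
/-! Let `S_I` be the set of workers who strictly prefer `M₁` to `M₂` under `I`. If both matchings
are stable, the firm `M₁ w` of a worker `w ∈ S_I` prefers its `M₂`-partner to `w`, and that
partner must then lie in `S_I` too; counting gives `M₁ '' S_I = M₂ '' S_I`. Hence the meet and
the join, which follow `M₁` on `S_I` and `M₂` off it (or the other way round), are bijections,
and the usual case analysis shows they are stable.

The meet and join under `I` depend on `I` only through `S_I`, and `S_I`, `S_J` can differ only at
`w₁`. If `w₁ ∈ S_I`, then `M₁ w₁ = M₂ v` for some `v ∈ S_I \ {w₁} ⊆ S_J`, so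
`M₁ w₁ ∈ M₂ '' S_J = M₁ '' S_J`, i.e. `w₁ ∈ S_J`. -/

theorem Set.injective_piecewise_of_image_eq {α β : Type*} {s : Set α}
    [∀ j, Decidable (j ∈ s)] {f g : α → β} (hf : Function.Injective f)
    (hg : Function.Injective g) (h : f '' s = g '' s) :
    Function.Injective (s.piecewise f g) := by
  refine (Set.injective_piecewise_iff s).2 ⟨hf.injOn, hg.injOn, fun x hx y hy hxy => hy ?_⟩
  obtain ⟨z, hz, hzx⟩ : f x ∈ g '' s := h ▸ Set.mem_image_of_mem f hx
  exact hg (hzx.trans hxy) ▸ hz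

namespace SMInstance

open Set

variable {n : ℕ} {I J : SMInstance n} {M M₁ M₂ : Fin n → Fin n}

theorem blocking_of_lt {w w' f : Fin n} (hw : I.wRank w f < I.wRank w (M w)) (hw' : M w' = f)
    (hf : I.fRank f w < I.fRank f w') : Blocking I M w f :=
  ⟨fun h => hw.ne (congrArg (I.wRank w) h.symm), hw, w', hw', hf⟩

def prefersFirst (I : SMInstance n) (M₁ M₂ : Fin n → Fin n) : Set (Fin n) :=
  {w | I.wRank w (M₁ w) < I.wRank w (M₂ w)}

instance (I : SMInstance n) (M₁ M₂ : Fin n → Fin n) :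
    DecidablePred (· ∈ I.prefersFirst M₁ M₂) :=
  fun w => inferInstanceAs (Decidable (I.wRank w (M₁ w) < I.wRank w (M₂ w)))

theorem mem_prefersFirst {w : Fin n} :
    w ∈ I.prefersFirst M₁ M₂ ↔ I.wRank w (M₁ w) < I.wRank w (M₂ w) :=
  Iff.rfl

theorem ne_of_mem_prefersFirst {w : Fin n} (hw : w ∈ I.prefersFirst M₁ M₂) : M₁ w ≠ M₂ w :=
  fun h => (mem_prefersFirst.1 hw).ne (congrArg (I.wRank w) h)

theorem meetMap_eq_piecewise (I : SMInstance n) (M₁ M₂ : Fin n → Fin n) :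
    meetMap I M₁ M₂ = (I.prefersFirst M₁ M₂).piecewise M₁ M₂ :=
  rfl

theorem joinMap_eq_piecewise (I : SMInstance n) (M₁ M₂ : Fin n → Fin n) :
    joinMap I M₁ M₂ = (I.prefersFirst M₁ M₂).piecewise M₂ M₁ :=
  rfl

theorem meetMap_eq_of_prefersFirst_eq (h : I.prefersFirst M₁ M₂ = J.prefersFirst M₁ M₂) :
    meetMap I M₁ M₂ = meetMap J M₁ M₂ :=
  funext fun w => if_congr (Set.ext_iff.1 h w) rfl rfl

theorem joinMap_eq_of_prefersFirst_eq (h : I.prefersFirst M₁ M₂ = J.prefersFirst M₁ M₂) :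
    joinMap I M₁ M₂ = joinMap J M₁ M₂ :=
  funext fun w => if_congr (Set.ext_iff.1 h w) rfl rfl

theorem joinMap_comm (I : SMInstance n) (M₁ M₂ : Fin n → Fin n) :
    joinMap I M₁ M₂ = joinMap I M₂ M₁ := by
  funext w
  unfold joinMap
  rcases lt_trichotomy (I.wRank w (M₁ w)) (I.wRank w (M₂ w)) with h | h | h
  · rw [if_pos h, if_neg (asymm h)]
  · simp [I.wRank_inj w h]
  · rw [if_neg (asymm h), if_pos h]

theorem wRank_meetMap_le_left (I : SMInstance n) (M₁ M₂ : Fin n → Fin n) (w : Fin n) :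
    I.wRank w (meetMap I M₁ M₂ w) ≤ I.wRank w (M₁ w) := by
  unfold meetMap
  split_ifs with h
  exacts [le_rfl, le_of_not_gt h]

theorem wRank_meetMap_le_right (I : SMInstance n) (M₁ M₂ : Fin n → Fin n) (w : Fin n) :
    I.wRank w (meetMap I M₁ M₂ w) ≤ I.wRank w (M₂ w) := by
  unfold meetMap
  split_ifs with h
  exacts [h.le, le_rfl]

/-- Opposite interests: otherwise `(w, M₁ w)` would block `M₂`. -/
theorem fRank_lt_of_mem_prefersFirst (h₂ : IsStable I M₂) {w w' : Fin n}
    (hw : w ∈ I.prefersFirst M₁ M₂) (hw' : M₂ w' = M₁ w) :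
    I.fRank (M₁ w) w' < I.fRank (M₁ w) w := by
  have hww' : w' ≠ w := by
    rintro rfl
    exact ne_of_mem_prefersFirst hw hw'.symm
  refine lt_of_le_of_ne (not_lt.1 fun h => h₂.2 w (M₁ w) (blocking_of_lt hw hw' h)) ?_
  exact fun h => hww' (I.fRank_inj (M₁ w) h)

theorem mem_prefersFirst_of_apply_eq (h₁ : IsStable I M₁) (h₂ : IsStable I M₂) {w w' : Fin n}
    (hw : w ∈ I.prefersFirst M₁ M₂) (hw' : M₂ w' = M₁ w) : w' ∈ I.prefersFirst M₁ M₂ := by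
  have hf := fRank_lt_of_mem_prefersFirst h₂ hw hw'
  have hne : M₁ w' ≠ M₂ w' := by
    rw [hw']
    rintro h
    exact hf.ne (congrArg _ (h₁.1.1 h))
  refine mem_prefersFirst.2 (lt_of_le_of_ne (not_lt.1 fun h => ?_) fun h => hne (I.wRank_inj w' h))
  exact h₁.2 w' (M₂ w') (blocking_of_lt h hw'.symm (by rwa [hw']))

theorem image_prefersFirst (h₁ : IsStable I M₁) (h₂ : IsStable I M₂) :
    M₁ '' I.prefersFirst M₁ M₂ = M₂ '' I.prefersFirst M₁ M₂ := by
  refine eq_of_subset_of_ncard_le ?_ ?_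
  · rintro _ ⟨w, hw, rfl⟩
    obtain ⟨w', hw'⟩ := h₂.1.2 (M₁ w)
    exact ⟨w', mem_prefersFirst_of_apply_eq h₁ h₂ hw hw', hw'⟩
  · rw [ncard_image_of_injective _ h₁.1.1, ncard_image_of_injective _ h₂.1.1]

theorem meetMap_bijective (h₁ : IsStable I M₁) (h₂ : IsStable I M₂) :
    Function.Bijective (meetMap I M₁ M₂) := by
  rw [← Finite.injective_iff_bijective, meetMap_eq_piecewise]
  exact injective_piecewise_of_image_eq h₁.1.1 h₂.1.1 (image_prefersFirst h₁ h₂)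

theorem joinMap_bijective (h₁ : IsStable I M₁) (h₂ : IsStable I M₂) :
    Function.Bijective (joinMap I M₁ M₂) := by
  rw [← Finite.injective_iff_bijective, joinMap_eq_piecewise]
  exact injective_piecewise_of_image_eq h₂.1.1 h₁.1.1 (image_prefersFirst h₁ h₂).symm

theorem meetMap_isStable (h₁ : IsStable I M₁) (h₂ : IsStable I M₂) :
    IsStable I (meetMap I M₁ M₂) := by
  refine ⟨meetMap_bijective h₁ h₂, ?_⟩
  rintro w f ⟨-, hlt, w', hw', hf⟩
  rw [meetMap_eq_piecewise] at hw'
  by_cases hw'S : w' ∈ I.prefersFirst M₁ M₂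
  · rw [piecewise_eq_of_mem _ _ _ hw'S] at hw'
    exact h₁.2 w f (blocking_of_lt (hlt.trans_le (wRank_meetMap_le_left I M₁ M₂ w)) hw' hf)
  · rw [piecewise_eq_of_notMem _ _ _ hw'S] at hw'
    exact h₂.2 w f (blocking_of_lt (hlt.trans_le (wRank_meetMap_le_right I M₁ M₂ w)) hw' hf)

/-- Such a pair would block `M₁`: if `f`'s join partner `w'` is not its `M₁`-partner, then
`w'` prefers `M₁`, hence so does the `M₁`-partner of `f`, whom `f` ranks below `w'`. -/
theorem not_blocking_joinMap_of_wRank_lt (h₁ : IsStable I M₁) (h₂ : IsStable I M₂)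
    {w w' f : Fin n} (hlt : I.wRank w f < I.wRank w (M₁ w)) (hw' : joinMap I M₁ M₂ w' = f)
    (hf : I.fRank f w < I.fRank f w') : False := by
  rw [joinMap_eq_piecewise] at hw'
  by_cases hw'S : w' ∈ I.prefersFirst M₁ M₂
  · rw [piecewise_eq_of_mem _ _ _ hw'S] at hw'
    obtain ⟨w'', hw''S, hw''⟩ : f ∈ M₁ '' I.prefersFirst M₁ M₂ := by
      rw [image_prefersFirst h₁ h₂, ← hw']
      exact mem_image_of_mem M₂ hw'S
    have hf' := fRank_lt_of_mem_prefersFirst h₂ hw''S (hw'.trans hw''.symm)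
    rw [hw''] at hf'
    exact h₁.2 w f (blocking_of_lt hlt hw'' (hf.trans hf'))
  · rw [piecewise_eq_of_notMem _ _ _ hw'S] at hw'
    exact h₁.2 w f (blocking_of_lt hlt hw' hf)

theorem joinMap_isStable (h₁ : IsStable I M₁) (h₂ : IsStable I M₂) :
    IsStable I (joinMap I M₁ M₂) := by
  refine ⟨joinMap_bijective h₁ h₂, ?_⟩
  rintro w f ⟨-, hlt, w', hw', hf⟩
  rw [joinMap_eq_piecewise] at hlt
  by_cases hwS : w ∈ I.prefersFirst M₁ M₂
  · rw [piecewise_eq_of_mem _ _ _ hwS] at hlt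
    rw [joinMap_comm] at hw'
    exact not_blocking_joinMap_of_wRank_lt h₂ h₁ hlt hw' hf
  · rw [piecewise_eq_of_notMem _ _ _ hwS] at hlt
    exact not_blocking_joinMap_of_wRank_lt h₁ h₂ hlt hw' hf

theorem mem_prefersFirst_of_wRank_eq_of_ne (h₁I : IsStable I M₁) (h₂I : IsStable I M₂)
    (h₁J : IsStable J M₁) (h₂J : IsStable J M₂) {w₁ : Fin n}
    (hW : ∀ w, w ≠ w₁ → I.wRank w = J.wRank w) (hw₁ : w₁ ∈ I.prefersFirst M₁ M₂) :
    w₁ ∈ J.prefersFirst M₁ M₂ := by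
  obtain ⟨v, hvI, hv⟩ : M₁ w₁ ∈ M₂ '' I.prefersFirst M₁ M₂ :=
    image_prefersFirst h₁I h₂I ▸ mem_image_of_mem M₁ hw₁
  have hvw₁ : v ≠ w₁ := by
    rintro rfl
    exact ne_of_mem_prefersFirst hw₁ hv.symm
  have hvJ : v ∈ J.prefersFirst M₁ M₂ := by
    rw [mem_prefersFirst, ← hW v hvw₁]
    exact hvI
  obtain ⟨u, huJ, hu⟩ : M₁ w₁ ∈ M₁ '' J.prefersFirst M₁ M₂ :=
    (image_prefersFirst h₁J h₂J).symm ▸ hv ▸ mem_image_of_mem M₂ hvJ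
  exact h₁J.1.1 hu ▸ huJ

theorem prefersFirst_eq_of_wRank_eq_of_ne (h₁I : IsStable I M₁) (h₂I : IsStable I M₂)
    (h₁J : IsStable J M₁) (h₂J : IsStable J M₂) {w₁ : Fin n}
    (hW : ∀ w, w ≠ w₁ → I.wRank w = J.wRank w) :
    I.prefersFirst M₁ M₂ = J.prefersFirst M₁ M₂ := by
  ext w
  by_cases hw : w = w₁
  · subst hw
    exact ⟨mem_prefersFirst_of_wRank_eq_of_ne h₁I h₂I h₁J h₂J hW,
      mem_prefersFirst_of_wRank_eq_of_ne h₁J h₂J h₁I h₂I fun v hv => (hW v hv).symm⟩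
  · rw [mem_prefersFirst, mem_prefersFirst, hW w hw]

end SMInstance

theorem stmt16_general {n k : ℕ} (A : Fin k → SMInstance n)
    (w₁ : Fin n)
    (hW : ∀ i j : Fin k, ∀ w, w ≠ w₁ → (A i).wRank w = (A j).wRank w)
    (M₁ M₂ : Fin n → Fin n)
    (h₁ : ∀ i, IsStable (A i) M₁) (h₂ : ∀ i, IsStable (A i) M₂) :
    (∀ i j, joinMap (A i) M₁ M₂ = joinMap (A j) M₁ M₂ ∧
            meetMap (A i) M₁ M₂ = meetMap (A j) M₁ M₂) ∧
    (∀ i j, IsStable (A i) (joinMap (A j) M₁ M₂) ∧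
            IsStable (A i) (meetMap (A j) M₁ M₂)) := by
  have hS (i j : Fin k) : (A i).prefersFirst M₁ M₂ = (A j).prefersFirst M₁ M₂ :=
    SMInstance.prefersFirst_eq_of_wRank_eq_of_ne (h₁ i) (h₂ i) (h₁ j) (h₂ j) (hW i j)
  have hjoin (i j : Fin k) : joinMap (A i) M₁ M₂ = joinMap (A j) M₁ M₂ :=
    SMInstance.joinMap_eq_of_prefersFirst_eq (hS i j)
  have hmeet (i j : Fin k) : meetMap (A i) M₁ M₂ = meetMap (A j) M₁ M₂ :=
    SMInstance.meetMap_eq_of_prefersFirst_eq (hS i j)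
  refine ⟨fun i j => ⟨hjoin i j, hmeet i j⟩, fun i j => ?_⟩
  rw [hjoin j i, hmeet j i]
  exact ⟨SMInstance.joinMap_isStable (h₁ i) (h₂ i), SMInstance.meetMap_isStable (h₁ i) (h₂ i)⟩

/-- for k ≥ 2 instances on the same agents in which all workers except
possibly w₁ have identical preferences, the intersection of the sets of stable
matchings is closed under the join and meet of each lattice, and these operations
coincide across the instances on the intersection. -/
theorem stmt16 {n k : ℕ} (hn : 1 ≤ n) (hk : 2 ≤ k) (A : Fin k → SMInstance n)
    (w₁ : Fin n)
    (hW : ∀ i j : Fin k, ∀ w, w ≠ w₁ → (A i).wRank w = (A j).wRank w)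
    (M₁ M₂ : Fin n → Fin n)
    (h₁ : ∀ i, IsStable (A i) M₁) (h₂ : ∀ i, IsStable (A i) M₂) :
    (∀ i j, joinMap (A i) M₁ M₂ = joinMap (A j) M₁ M₂ ∧
            meetMap (A i) M₁ M₂ = meetMap (A j) M₁ M₂) ∧
    (∀ i j, IsStable (A i) (joinMap (A j) M₁ M₂) ∧
            IsStable (A i) (meetMap (A j) M₁ M₂)) :=
  stmt16_general A w₁ hW M₁ M₂ h₁ h₂
end

section
/- For any stable matching instance I on n workers and n firms, the fractional stable matching polytope P_I equals the convex hull of the indicator vectors of the matchings stable under I; in particular, every extreme point of P_I is the indicator vector of a stable matching of I. -/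
open Finset in
/-- Membership in the fractional stable matching polytope P_I. -/
def InPolytope {n : ℕ} (I : SMInstance n) (x : Fin n → Fin n → ℝ) : Prop :=
  (∀ w f, 0 ≤ x w f) ∧
  (∀ w, ∑ f, x w f = 1) ∧
  (∀ f, ∑ w, x w f = 1) ∧
  (∀ w f, ∑ f' ∈ univ.filter (fun f' => I.wRank w f < I.wRank w f'), x w f' ≤
          ∑ w' ∈ univ.filter (fun w' => I.fRank f w' < I.fRank f w), x w' f)

/-- The 0/1 indicator vector of a matching M. -/
def indicVec {n : ℕ} (M : Fin n → Fin n) : Fin n → Fin n → ℝ :=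
  fun w f => if M w = f then 1 else 0

open Finset

/-! For `x ∈ P_I` let `b w` be the firm `w` likes best among those with `x w f > 0`. Since
`w`'s remaining weight sits on firms worse than `b w`, adding the row and column equations to
the stability constraint at `(w, b w)` shows that every other worker with weight at `b w` is
preferred by `b w` to `w`. Hence `b` is injective, so a matching, and a blocking pair of `b`
would violate the constraint of `x` at that pair, so `b` is stable. With
`ε = min_w x w (b w)`, the point `(1 - ε)⁻¹ (x - ε 1_b)` lies again in `P_I` and has smaller
support, so induction on the support writes `x` as a convex combination of stable matchings.
Extreme points of a convex hull lie in the generating set. -/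

section UnitSum

variable {ι : Type*} [Fintype ι] {v : ι → ℝ} {s : Finset ι} {a b : ι}

theorem sum_le_one_of_nonneg_of_sum_eq_one (hv0 : ∀ i, 0 ≤ v i) (hv1 : ∑ i, v i = 1)
    (s : Finset ι) : ∑ i ∈ s, v i ≤ 1 :=
  hv1 ▸ sum_le_univ_sum_of_nonneg hv0

theorem sum_add_le_one_of_notMem [DecidableEq ι] (hv0 : ∀ i, 0 ≤ v i)
    (hv1 : ∑ i, v i = 1) (ha : a ∉ s) : ∑ i ∈ s, v i + v a ≤ 1 := by
  have := sum_le_one_of_nonneg_of_sum_eq_one hv0 hv1 (insert a s)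
  rwa [sum_insert ha, add_comm] at this

theorem sum_add_add_le_one_of_notMem [DecidableEq ι] (hv0 : ∀ i, 0 ≤ v i)
    (hv1 : ∑ i, v i = 1) (ha : a ∉ s) (hb : b ∉ s) (hab : a ≠ b) :
    ∑ i ∈ s, v i + v a + v b ≤ 1 := by
  have := sum_add_le_one_of_notMem hv0 hv1 (s := insert a s) (a := b) (by simp [hab.symm, hb])
  rwa [sum_insert ha, add_comm (v a)] at this

theorem sum_eq_one_of_pos_mem (hv0 : ∀ i, 0 ≤ v i) (hv1 : ∑ i, v i = 1)
    (h : ∀ i, 0 < v i → i ∈ s) : ∑ i ∈ s, v i = 1 :=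
  hv1 ▸ sum_subset (subset_univ s) fun i _ hi => ((hv0 i).lt_or_eq.resolve_left (mt (h i) hi)).symm

end UnitSum

variable {n : ℕ}

namespace SMInstance

def worseFirms (I : SMInstance n) (w f : Fin n) : Finset (Fin n) :=
  univ.filter fun f' => I.wRank w f < I.wRank w f'

def betterWorkers (I : SMInstance n) (f w : Fin n) : Finset (Fin n) :=
  univ.filter fun w' => I.fRank f w' < I.fRank f w

@[simp]
theorem mem_worseFirms {I : SMInstance n} {w f f' : Fin n} :
    f' ∈ I.worseFirms w f ↔ I.wRank w f < I.wRank w f' := by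
  simp [worseFirms]

@[simp]
theorem mem_betterWorkers {I : SMInstance n} {f w w' : Fin n} :
    w' ∈ I.betterWorkers f w ↔ I.fRank f w' < I.fRank f w := by
  simp [betterWorkers]

end SMInstance

open SMInstance

theorem sum_indicVec_row (M : Fin n → Fin n) (w : Fin n) (s : Finset (Fin n)) :
    ∑ f ∈ s, indicVec M w f = if M w ∈ s then 1 else 0 := by
  simp [indicVec]

theorem sum_indicVec_col {M : Fin n → Fin n} (hM : Function.Injective M) {w' f : Fin n}
    (hw' : M w' = f) (s : Finset (Fin n)) :
    ∑ w ∈ s, indicVec M w f = if w' ∈ s then 1 else 0 := by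
  subst hw'
  simp [indicVec, hM.eq_iff]

namespace InPolytope

variable {I : SMInstance n} {x : Fin n → Fin n → ℝ}

theorem nonneg (hx : InPolytope I x) (w f : Fin n) : 0 ≤ x w f := hx.1 w f

theorem sum_row (hx : InPolytope I x) (w : Fin n) : ∑ f, x w f = 1 := hx.2.1 w

theorem sum_col (hx : InPolytope I x) (f : Fin n) : ∑ w, x w f = 1 := hx.2.2.1 f

theorem sum_worseFirms_le (hx : InPolytope I x) (w f : Fin n) :
    ∑ f' ∈ I.worseFirms w f, x w f' ≤ ∑ w' ∈ I.betterWorkers f w, x w' f :=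
  hx.2.2.2 w f

theorem exists_pos (hx : InPolytope I x) (w : Fin n) : ∃ f, 0 < x w f := by
  by_contra! h
  have := sum_nonpos fun f (_ : f ∈ univ) => h f
  linarith [hx.sum_row w]

theorem eq_indicVec {M : Fin n → Fin n} (hx : InPolytope I x) (h : ∀ w, 1 ≤ x w (M w)) :
    x = indicVec M := by
  funext w f
  unfold indicVec
  split_ifs with hf
  · subst hf
    exact le_antisymm (by simpa [hx.sum_row] using
      sum_le_one_of_nonneg_of_sum_eq_one (hx.nonneg w) (hx.sum_row w) {M w}) (h w)
  · have := sum_add_add_le_one_of_notMem (hx.nonneg w) (hx.sum_row w)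
      (s := ∅) (notMem_empty (M w)) (notMem_empty f) hf
    rw [sum_empty] at this
    linarith [h w, hx.nonneg w f]

end InPolytope

theorem convex_inPolytope (I : SMInstance n) : Convex ℝ {x | InPolytope I x} := by
  intro x hx y hy a b ha hb hab
  simp only [Set.mem_ofPred_eq, InPolytope, Pi.add_apply, Pi.smul_apply, smul_eq_mul,
    sum_add_distrib, ← mul_sum]
  refine ⟨fun w f => ?_, fun w => ?_, fun f => ?_, fun w f => ?_⟩
  · exact add_nonneg (mul_nonneg ha (hx.nonneg w f)) (mul_nonneg hb (hy.nonneg w f))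
  · rw [hx.sum_row, hy.sum_row, mul_one, mul_one, hab]
  · rw [hx.sum_col, hy.sum_col, mul_one, mul_one, hab]
  · exact add_le_add (mul_le_mul_of_nonneg_left (hx.sum_worseFirms_le w f) ha)
      (mul_le_mul_of_nonneg_left (hy.sum_worseFirms_le w f) hb)

theorem inPolytope_inv_smul {I : SMInstance n} {z : Fin n → Fin n → ℝ} {c : ℝ} (hc : 0 < c)
    (hz0 : ∀ w f, 0 ≤ z w f) (hrow : ∀ w, ∑ f, z w f = c) (hcol : ∀ f, ∑ w, z w f = c)
    (hstab : ∀ w f, ∑ f' ∈ I.worseFirms w f, z w f' ≤ ∑ w' ∈ I.betterWorkers f w, z w' f) :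
    InPolytope I (c⁻¹ • z) := by
  simp only [InPolytope, Pi.smul_apply, smul_eq_mul, ← mul_sum]
  refine ⟨fun w f => mul_nonneg (inv_nonneg.2 hc.le) (hz0 w f), fun w => ?_, fun f => ?_,
    fun w f => mul_le_mul_of_nonneg_left (hstab w f) (inv_nonneg.2 hc.le)⟩
  · rw [hrow, inv_mul_cancel₀ hc.ne']
  · rw [hcol, inv_mul_cancel₀ hc.ne']

theorem IsStable.inPolytope {I : SMInstance n} {M : Fin n → Fin n} (hM : IsStable I M) :
    InPolytope I (indicVec M) := by
  obtain ⟨hbij, hstab⟩ := hM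
  refine ⟨fun w f => by unfold indicVec; positivity, fun w => ?_, fun f => ?_, fun w f => ?_⟩
  · simp [sum_indicVec_row]
  · obtain ⟨w', hw'⟩ := hbij.2 f
    simp [sum_indicVec_col hbij.1 hw']
  · obtain ⟨w', hw'⟩ := hbij.2 f
    change ∑ f' ∈ I.worseFirms w f, _ ≤ ∑ w'' ∈ I.betterWorkers f w, _
    rw [sum_indicVec_row, sum_indicVec_col hbij.1 hw']
    split_ifs with hworse hbetter <;> try norm_num
    have hne : M w ≠ f := by rintro rfl; exact lt_irrefl _ (mem_worseFirms.1 hworse)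
    have hle : I.fRank f w' ≤ I.fRank f w :=
      not_lt.1 fun h => hstab w f ⟨hne, mem_worseFirms.1 hworse, w', hw', h⟩
    have hw'w : w' ≠ w := by rintro rfl; exact hne hw'
    exact hbetter (mem_betterWorkers.2 (hle.lt_of_ne (mt (I.fRank_inj f ·) hw'w)))

def IsFirstChoice (I : SMInstance n) (x : Fin n → Fin n → ℝ) (b : Fin n → Fin n) : Prop :=
  ∀ w, 0 < x w (b w) ∧ ∀ f, 0 < x w f → I.wRank w (b w) ≤ I.wRank w f

theorem InPolytope.exists_isFirstChoice {I : SMInstance n} {x : Fin n → Fin n → ℝ}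
    (hx : InPolytope I x) : ∃ b, IsFirstChoice I x b := by
  have (w : Fin n) : ∃ f, 0 < x w f ∧ ∀ f', 0 < x w f' → I.wRank w f ≤ I.wRank w f' := by
    obtain ⟨f, hf⟩ := hx.exists_pos w
    obtain ⟨g, hg, hmin⟩ := exists_min_image (univ.filter fun f => 0 < x w f) (I.wRank w)
      ⟨f, by simpa using hf⟩
    exact ⟨g, by simpa using hg, fun f' hf' => hmin f' (by simpa using hf')⟩
  choose b hb using this
  exact ⟨b, hb⟩

noncomputable def peel (x : Fin n → Fin n → ℝ) (b : Fin n → Fin n) (ε : ℝ) :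
    Fin n → Fin n → ℝ :=
  (1 - ε)⁻¹ • (x - ε • indicVec b)

noncomputable def pairSupport (x : Fin n → Fin n → ℝ) : Finset (Fin n × Fin n) :=
  univ.filter fun p => x p.1 p.2 ≠ 0

namespace IsFirstChoice

variable {I : SMInstance n} {x : Fin n → Fin n → ℝ} {b : Fin n → Fin n}

/-- The stability constraint at `(w, b w)` is tight, since `w` puts all its weight outside
`b w` on worse firms; so no other worker with weight at `b w` can rank below `w` there. -/
theorem fRank_lt (hx : InPolytope I x) (hb : IsFirstChoice I x b) {w w' : Fin n}
    (hw' : w' ≠ w) (hpos : 0 < x w' (b w)) : I.fRank (b w) w' < I.fRank (b w) w := by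
  by_contra hle
  have hrow : x w (b w) + ∑ f ∈ I.worseFirms w (b w), x w f = 1 := by
    rw [← sum_insert (by simp)]
    refine sum_eq_one_of_pos_mem (hx.nonneg w) (hx.sum_row w) fun f hf => ?_
    rcases eq_or_ne f (b w) with rfl | hfb
    · exact mem_insert_self _ _
    · exact mem_insert_of_mem <| mem_worseFirms.2 <|
        ((hb w).2 f hf).lt_of_ne (mt (I.wRank_inj w ·) hfb.symm)
  have hcol := sum_add_add_le_one_of_notMem (hx.nonneg · (b w)) (hx.sum_col (b w))
    (s := I.betterWorkers (b w) w) (by simp) (by simpa using hle) hw'.symm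
  linarith [hx.sum_worseFirms_le w (b w)]

theorem injective (hx : InPolytope I x) (hb : IsFirstChoice I x b) : Function.Injective b := by
  intro w₁ w₂ h
  by_contra hne
  have h₁ := hb.fRank_lt hx (Ne.symm hne) (h ▸ (hb w₂).1)
  have h₂ := hb.fRank_lt hx hne (h.symm ▸ (hb w₁).1)
  rw [h] at h₁
  exact lt_asymm h₁ h₂

theorem bijective (hx : InPolytope I x) (hb : IsFirstChoice I x b) : Function.Bijective b :=
  Finite.injective_iff_bijective.mp (hb.injective hx)

theorem isStable (hx : InPolytope I x) (hb : IsFirstChoice I x b) : IsStable I b := by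
  refine ⟨hb.bijective hx, fun w f ⟨_, hpref, w', hw', hfw⟩ => ?_⟩
  have hrow : ∑ f' ∈ I.worseFirms w f, x w f' = 1 :=
    sum_eq_one_of_pos_mem (hx.nonneg w) (hx.sum_row w) fun f' hf' =>
      mem_worseFirms.2 (hpref.trans_le ((hb w).2 f' hf'))
  have hcol := sum_add_le_one_of_notMem (hx.nonneg · f) (hx.sum_col f)
    (s := I.betterWorkers f w) (a := w') (by simpa using hfw.le)
  have hpos : 0 < x w' f := hw' ▸ (hb w').1
  linarith [hx.sum_worseFirms_le w f]

theorem sum_worseFirms_add_le (hx : InPolytope I x) (hb : IsFirstChoice I x b)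
    {w w' f : Fin n} (hbw : b w ∉ I.worseFirms w f) (hw' : b w' = f)
    (hbetter : w' ∈ I.betterWorkers f w) :
    ∑ f' ∈ I.worseFirms w f, x w f' + x w (b w) ≤ ∑ w'' ∈ I.betterWorkers f w, x w'' f := by
  have hcol : ∑ w'' ∈ I.betterWorkers f w, x w'' f = 1 := by
    refine sum_eq_one_of_pos_mem (hx.nonneg · f) (hx.sum_col f) fun w'' hpos => ?_
    rcases eq_or_ne w'' w' with rfl | hne
    · exact hbetter
    · subst hw'
      exact mem_betterWorkers.2 ((hb.fRank_lt hx hne hpos).trans (mem_betterWorkers.1 hbetter))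
  rw [hcol]
  exact sum_add_le_one_of_notMem (hx.nonneg w) (hx.sum_row w) hbw

theorem sum_worseFirms_sub_smul_le (hx : InPolytope I x) (hb : IsFirstChoice I x b) {ε : ℝ}
    (hε0 : 0 ≤ ε) (hε : ∀ w, ε ≤ x w (b w)) (w f : Fin n) :
    ∑ f' ∈ I.worseFirms w f, (x - ε • indicVec b) w f' ≤
      ∑ w' ∈ I.betterWorkers f w, (x - ε • indicVec b) w' f := by
  obtain ⟨w', hw'⟩ := (hb.bijective hx).2 f
  simp only [Pi.sub_apply, Pi.smul_apply, smul_eq_mul, sum_sub_distrib, ← mul_sum,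
    sum_indicVec_row, sum_indicVec_col (hb.injective hx) hw']
  have := hx.sum_worseFirms_le w f
  split_ifs with hbw hbetter hbetter
  · linarith
  · linarith
  · linarith [hb.sum_worseFirms_add_le hx hbw hw' hbetter, hε w]
  · linarith

theorem inPolytope_peel (hx : InPolytope I x) (hb : IsFirstChoice I x b) {ε : ℝ}
    (hε0 : 0 ≤ ε) (hε1 : ε < 1) (hε : ∀ w, ε ≤ x w (b w)) : InPolytope I (peel x b ε) := by
  refine inPolytope_inv_smul (sub_pos.2 hε1) (fun w f => ?_) (fun w => ?_) (fun f => ?_)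
    (hb.sum_worseFirms_sub_smul_le hx hε0 hε)
  · simp only [Pi.sub_apply, Pi.smul_apply, smul_eq_mul, indicVec]
    split_ifs with h
    · linarith [h ▸ hε w]
    · linarith [hx.nonneg w f]
  · simp only [Pi.sub_apply, Pi.smul_apply, smul_eq_mul, sum_sub_distrib, ← mul_sum,
      sum_indicVec_row, hx.sum_row]
    simp
  · obtain ⟨w', hw'⟩ := (hb.bijective hx).2 f
    simp only [Pi.sub_apply, Pi.smul_apply, smul_eq_mul, sum_sub_distrib, ← mul_sum,
      sum_indicVec_col (hb.injective hx) hw', hx.sum_col]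
    simp

theorem pairSupport_peel_ssubset (hb : IsFirstChoice I x b) (w₀ : Fin n) :
    pairSupport (peel x b (x w₀ (b w₀))) ⊂ pairSupport x := by
  have hsub : pairSupport (peel x b (x w₀ (b w₀))) ⊆ pairSupport x := fun ⟨w, f⟩ => by
    simp only [pairSupport, mem_filter, mem_univ, true_and]
    intro hy hxwf
    have hbf : b w ≠ f := by rintro rfl; exact (hb w).1.ne' hxwf
    simp [peel, hxwf, indicVec, hbf] at hy
  refine (ssubset_iff_of_subset hsub).2 ⟨(w₀, b w₀), ?_, ?_⟩
  · simpa [pairSupport] using (hb w₀).1.ne'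
  · simp [pairSupport, peel, indicVec]

end IsFirstChoice

def stableIndicators (I : SMInstance n) : Set (Fin n → Fin n → ℝ) :=
  {x | ∃ M, IsStable I M ∧ x = indicVec M}

theorem InPolytope.mem_convexHull_stableIndicators {I : SMInstance n}
    {x : Fin n → Fin n → ℝ} (hx : InPolytope I x) : x ∈ convexHull ℝ (stableIndicators I) := by
  induction hk : (pairSupport x).card using Nat.strong_induction_on generalizing x with
  | _ k ih =>
  obtain ⟨b, hb⟩ := hx.exists_isFirstChoice
  have hbM : indicVec b ∈ convexHull ℝ (stableIndicators I) :=
    subset_convexHull ℝ _ ⟨b, hb.isStable hx, rfl⟩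
  by_cases h1 : ∀ w, 1 ≤ x w (b w)
  · rwa [hx.eq_indicVec h1]
  obtain ⟨w₁, hw₁⟩ := not_forall.1 h1
  obtain ⟨w₀, -, hmin⟩ := exists_min_image univ (fun w => x w (b w)) ⟨w₁, mem_univ _⟩
  set ε := x w₀ (b w₀)
  have hε0 : 0 < ε := (hb w₀).1
  have hε1 : ε < 1 := (hmin w₁ (mem_univ _)).trans_lt (not_le.1 hw₁)
  have hy : peel x b ε ∈ convexHull ℝ (stableIndicators I) :=
    ih _ (hk ▸ card_lt_card (hb.pairSupport_peel_ssubset w₀))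
      (hb.inPolytope_peel hx hε0.le hε1 fun w => hmin w (mem_univ w)) rfl
  have hxy : x = ε • indicVec b + (1 - ε) • peel x b ε := by
    rw [peel, smul_smul, mul_inv_cancel₀ (sub_pos.2 hε1).ne', one_smul, add_sub_cancel]
  rw [hxy]
  exact convex_convexHull ℝ _ hbM hy hε0.le (sub_pos.2 hε1).le (add_sub_cancel _ _)

theorem stmt17_general {n : ℕ} (I : SMInstance n) :
    ({x : Fin n → Fin n → ℝ | InPolytope I x} =
      convexHull ℝ {x : Fin n → Fin n → ℝ | ∃ M, IsStable I M ∧ x = indicVec M}) ∧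
    (∀ x ∈ Set.extremePoints ℝ {x : Fin n → Fin n → ℝ | InPolytope I x},
      ∃ M, IsStable I M ∧ x = indicVec M) := by
  have hP : {x | InPolytope I x} = convexHull ℝ (stableIndicators I) :=
    Set.Subset.antisymm (fun _ hx => InPolytope.mem_convexHull_stableIndicators hx)
      (convexHull_min (fun _ ⟨_, hM, hx⟩ => hx ▸ hM.inPolytope) (convex_inPolytope I))
  refine ⟨hP, fun x hx => ?_⟩
  rw [hP] at hx
  exact (extremePoints_convexHull_subset hx : x ∈ stableIndicators I)

/-- the fractional stable matching polytope of an instance I equals the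
convex hull of the indicator vectors of the I-stable matchings; in particular every
extreme point of P_I is the indicator vector of a stable matching. -/
theorem stmt17 {n : ℕ} (hn : 1 ≤ n) (I : SMInstance n) :
    ({x : Fin n → Fin n → ℝ | InPolytope I x} =
      convexHull ℝ {x : Fin n → Fin n → ℝ | ∃ M, IsStable I M ∧ x = indicVec M}) ∧
    (∀ x ∈ Set.extremePoints ℝ {x : Fin n → Fin n → ℝ | InPolytope I x},
      ∃ M, IsStable I M ∧ x = indicVec M) :=
  stmt17_general I
end
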